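/- Let Y ↔ X ↔ Z be a Markov chain (Z a representation of X) and suppose X ↔ Z₁ ↔ Y holds where Z = (Z₁, Z̃). Then X ↔ Z ↔ Y holds, i.e., I(Y;X|Z) = 0 (explicitness). -/

import Mathlib

open BigOperators Real

variable {Ω : Type*} [Fintype Ω]

/-- `p` is a probability mass function on the finite sample space `Ω`. -/
def IsPMF {Ω : Type*} [Fintype Ω] (p : Ω → ℝ) : Prop :=
  (∀ ω, 0 ≤ p ω) ∧ ∑ ω, p ω = 1

/-- The probability that the random variable `A` takes the value `a`. -/
noncomputable def prob {Ω : Type*} [Fintype Ω] (p : Ω → ℝ) {α : Type*} [DecidableEq α]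
    (A : Ω → α) (a : α) : ℝ :=
  ∑ ω ∈ Finset.univ.filter (fun ω => A ω = a), p ω

/-- The Shannon entropy `H(A)` of the random variable `A`. -/
noncomputable def entropy {Ω : Type*} [Fintype Ω] (p : Ω → ℝ) {α : Type*} [DecidableEq α]
    (A : Ω → α) : ℝ :=
  -∑ a ∈ Finset.univ.image A, prob p A a * Real.log (prob p A a)

/-- The mutual information `I(A;B)`. -/
noncomputable def mutualInfo {Ω : Type*} [Fintype Ω] (p : Ω → ℝ) {α β : Type*}
    [DecidableEq α] [DecidableEq β] (A : Ω → α) (B : Ω → β) : ℝ :=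
  entropy p A + entropy p B - entropy p (fun ω => (A ω, B ω))

/-- The conditional mutual information `I(A;B∣C)`. -/
noncomputable def condMutualInfo {Ω : Type*} [Fintype Ω] (p : Ω → ℝ) {α β γ : Type*}
    [DecidableEq α] [DecidableEq β] [DecidableEq γ]
    (A : Ω → α) (B : Ω → β) (C : Ω → γ) : ℝ :=
  entropy p (fun ω => (A ω, C ω)) + entropy p (fun ω => (B ω, C ω))
    - entropy p (fun ω => (A ω, B ω, C ω)) - entropy p C

/-- The conditional entropy `H(A∣C)`. -/
noncomputable def condEntropy {Ω : Type*} [Fintype Ω] (p : Ω → ℝ) {α γ : Type*}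
    [DecidableEq α] [DecidableEq γ] (A : Ω → α) (C : Ω → γ) : ℝ :=
  entropy p (fun ω => (A ω, C ω)) - entropy p C


section Aux2

variable {α β γ δ : Type*} [DecidableEq α] [DecidableEq β] [DecidableEq γ] [DecidableEq δ]
variable (p : Ω → ℝ)


variable {α β γ δ : Type*} [DecidableEq α] [DecidableEq β] [DecidableEq γ] [DecidableEq δ]
variable (p : Ω → ℝ)

lemma prob_nonneg (hp : ∀ ω, 0 ≤ p ω) (A : Ω → α) (a : α) : 0 ≤ prob p A a :=
  Finset.sum_nonneg fun ω _ => hp ω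

lemma le_prob (hp : ∀ ω, 0 ≤ p ω) (A : Ω → α) (ω : Ω) : p ω ≤ prob p A (A ω) :=
  Finset.single_le_sum (fun ω _ => hp ω) (by simp)

lemma prob_le_prob (hp : ∀ ω, 0 ≤ p ω) (A : Ω → α) (B : Ω → β) (f : α → β)
    (hf : ∀ ω, B ω = f (A ω)) (a : α) : prob p A a ≤ prob p B (f a) := by
  apply Finset.sum_le_sum_of_subset_of_nonneg
  · intro ω hω
    simp only [Finset.mem_filter, Finset.mem_univ, true_and] at hω ⊢
    rw [hf, hω]
  · intro i _ _; exact hp i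

lemma sum_fiber (A : Ω → α) (g : α → ℝ) :
    ∑ a ∈ Finset.univ.image A, prob p A a * g a = ∑ ω, p ω * g (A ω) := by
  rw [← Finset.sum_fiberwise_of_maps_to
      (fun ω _ => Finset.mem_image_of_mem A (Finset.mem_univ ω)) (fun ω => p ω * g (A ω))]
  refine Finset.sum_congr rfl fun a _ => ?_
  rw [prob, Finset.sum_mul]
  refine Finset.sum_congr rfl fun ω hω => ?_
  simp only [Finset.mem_filter] at hω
  rw [hω.2]

lemma entropy_eq (A : Ω → α) :
    entropy p A = -∑ ω, p ω * Real.log (prob p A (A ω)) := by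
  rw [entropy, sum_fiber]

lemma sum_prob (A : Ω → α) : ∑ a ∈ Finset.univ.image A, prob p A a = ∑ ω, p ω := by
  simpa using sum_fiber p A (fun _ => 1)

lemma marginal (A : Ω → α) (C : Ω → γ) (c : γ) :
    ∑ a ∈ Finset.univ.image A, prob p (fun ω => (A ω, C ω)) (a, c) = prob p C c := by
  unfold prob
  rw [← Finset.sum_fiberwise_of_maps_to (s := Finset.univ.filter (fun ω => C ω = c))
      (g := A) (t := Finset.univ.image A)
      (fun ω _ => Finset.mem_image_of_mem A (Finset.mem_univ ω)) p]
  refine Finset.sum_congr rfl fun a _ => Finset.sum_congr ?_ fun _ _ => rfl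
  ext ω
  simp only [Finset.mem_filter, Finset.mem_univ, true_and, Prod.mk.injEq]
  tauto

lemma entropy_congr (A : Ω → α) (B : Ω → β) (f : α → β) (g : β → α)
    (hf : ∀ ω, B ω = f (A ω)) (hg : ∀ ω, A ω = g (B ω)) :
    entropy p A = entropy p B := by
  have hgf : ∀ ω, g (f (A ω)) = A ω := fun ω => by rw [← hf, ← hg]
  have himg : Finset.univ.image B = (Finset.univ.image A).image f := by
    ext b
    simp only [Finset.mem_image, Finset.mem_univ, true_and]
    constructor
    · rintro ⟨ω, rfl⟩; exact ⟨A ω, ⟨ω, rfl⟩, (hf ω).symm⟩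
    · rintro ⟨a, ⟨ω, rfl⟩, rfl⟩; exact ⟨ω, hf ω⟩
  have hinj : ∀ x ∈ Finset.univ.image A, ∀ y ∈ Finset.univ.image A, f x = f y → x = y := by
    rintro x hx y hy hxy
    obtain ⟨ω₁, -, rfl⟩ := Finset.mem_image.1 hx
    obtain ⟨ω₂, -, rfl⟩ := Finset.mem_image.1 hy
    rw [← hgf ω₁, hxy, hgf ω₂]
  have hprob : ∀ x ∈ Finset.univ.image A, prob p B (f x) = prob p A x := by
    rintro x hx
    obtain ⟨ω₀, -, rfl⟩ := Finset.mem_image.1 hx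
    unfold prob
    refine Finset.sum_congr ?_ fun _ _ => rfl
    ext ω
    simp only [Finset.mem_filter, Finset.mem_univ, true_and]
    constructor
    · intro h; rw [hg ω, h, ← hf ω₀, ← hg ω₀]
    · intro h; rw [hf ω, h]
  rw [entropy, entropy, himg, Finset.sum_image hinj]
  exact congrArg Neg.neg (Finset.sum_congr rfl fun x hx => by rw [hprob x hx])


lemma cmi_nonneg (hp : IsPMF p) (A : Ω → α) (B : Ω → β) (C : Ω → γ) :
    0 ≤ condMutualInfo p A B C := by
  obtain ⟨hp0, hp1⟩ := hp
  set T : Ω → α × β × γ := fun ω => (A ω, B ω, C ω) with hT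
  set pT : α × β × γ → ℝ := prob p T with hpT
  set pAC : α × γ → ℝ := prob p (fun ω => (A ω, C ω)) with hpAC
  set pBC : β × γ → ℝ := prob p (fun ω => (B ω, C ω)) with hpBC
  set pC : γ → ℝ := prob p C with hpC
  set R : α × β × γ → ℝ := fun t => pAC (t.1, t.2.2) * pBC (t.2.1, t.2.2) / (pT t * pC t.2.2)
    with hR
  set S : α × β × γ → ℝ := fun t => pAC (t.1, t.2.2) * pBC (t.2.1, t.2.2) / pC t.2.2 with hS
  have hSnn : ∀ t, 0 ≤ S t := fun t => div_nonneg
    (mul_nonneg (prob_nonneg p hp0 _ _) (prob_nonneg p hp0 _ _)) (prob_nonneg p hp0 _ _)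
  have hcmi : condMutualInfo p A B C =
      -∑ ω, p ω * (Real.log (pAC (A ω, C ω)) + Real.log (pBC (B ω, C ω))
        - Real.log (pT (T ω)) - Real.log (pC (C ω))) := by
    rw [condMutualInfo, entropy_eq p (fun ω => (A ω, C ω)), entropy_eq p (fun ω => (B ω, C ω)),
      entropy_eq p (fun ω => (A ω, B ω, C ω)), entropy_eq p C]
    simp only [mul_add, mul_sub]
    rw [Finset.sum_sub_distrib, Finset.sum_sub_distrib, Finset.sum_add_distrib]
    simp only [hpAC, hpBC, hpT, hpC, hT]
    ring_nf
  rw [hcmi, neg_nonneg]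
  -- termwise log bound
  have key : ∀ ω, p ω * (Real.log (pAC (A ω, C ω)) + Real.log (pBC (B ω, C ω))
      - Real.log (pT (T ω)) - Real.log (pC (C ω))) ≤ p ω * R (T ω) - p ω := by
    intro ω
    rcases eq_or_lt_of_le (hp0 ω) with h | h
    · simp [← h]
    · have h1 : 0 < pT (T ω) := lt_of_lt_of_le h (le_prob p hp0 T ω)
      have h2 : 0 < pAC (A ω, C ω) := lt_of_lt_of_le h (le_prob p hp0 (fun ω => (A ω, C ω)) ω)
      have h3 : 0 < pBC (B ω, C ω) := lt_of_lt_of_le h (le_prob p hp0 (fun ω => (B ω, C ω)) ω)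
      have h4 : 0 < pC (C ω) := lt_of_lt_of_le h (le_prob p hp0 C ω)
      have hrw : Real.log (pAC (A ω, C ω)) + Real.log (pBC (B ω, C ω))
          - Real.log (pT (T ω)) - Real.log (pC (C ω)) = Real.log (R (T ω)) := by
        rw [hR]
        rw [Real.log_div (by positivity) (by positivity), Real.log_mul (ne_of_gt h2) (ne_of_gt h3),
          Real.log_mul (ne_of_gt h1) (ne_of_gt h4)]
        ring
      rw [hrw]
      have hrpos : 0 < R (T ω) := by rw [hR]; positivity
      have := Real.log_le_sub_one_of_pos hrpos
      have h5 := mul_le_mul_of_nonneg_left this (le_of_lt h)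
      rw [mul_sub, mul_one] at h5
      linarith
  have hsum1 : ∑ ω, (p ω * R (T ω) - p ω) = (∑ ω, p ω * R (T ω)) - 1 := by
    rw [Finset.sum_sub_distrib, hp1]
  have hsum2 : ∑ ω, p ω * R (T ω) = ∑ t ∈ Finset.univ.image T, pT t * R t :=
    (sum_fiber p T R).symm
  have hterm : ∀ t ∈ Finset.univ.image T, pT t * R t ≤ S t := by
    intro t ht
    rcases eq_or_lt_of_le (prob_nonneg p hp0 T t) with h | h
    · rw [← hpT] at h
      rw [← h, zero_mul]; exact hSnn t
    · have hCpos : 0 < pC t.2.2 :=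
        lt_of_lt_of_le h (prob_le_prob p hp0 T C (fun t => t.2.2) (fun ω => rfl) t)
      apply le_of_eq
      rw [hR, hS]
      field_simp
      rw [mul_assoc, mul_div_cancel_left₀ _ (show pT t ≠ 0 from ne_of_gt h)]
  have hsub : Finset.univ.image T ⊆
      (Finset.univ.image A) ×ˢ ((Finset.univ.image B) ×ˢ (Finset.univ.image C)) := by
    intro t ht
    obtain ⟨ω, -, rfl⟩ := Finset.mem_image.1 ht
    simp [Finset.mem_product]
    exact ⟨⟨ω, rfl⟩, ⟨ω, rfl⟩, ⟨ω, rfl⟩⟩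
  have hsum3 : ∑ t ∈ Finset.univ.image T, S t ≤
      ∑ t ∈ (Finset.univ.image A) ×ˢ ((Finset.univ.image B) ×ˢ (Finset.univ.image C)), S t :=
    Finset.sum_le_sum_of_subset_of_nonneg hsub (fun t _ _ => hSnn t)
  have hsum4 : ∑ t ∈ (Finset.univ.image A) ×ˢ ((Finset.univ.image B) ×ˢ (Finset.univ.image C)), S t
      = ∑ c ∈ Finset.univ.image C, ∑ a ∈ Finset.univ.image A, ∑ b ∈ Finset.univ.image B,
          S (a, b, c) := by
    rw [Finset.sum_product]
    calc ∑ a ∈ Finset.univ.image A, ∑ x ∈ (Finset.univ.image B) ×ˢ (Finset.univ.image C), S (a, x)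
        = ∑ a ∈ Finset.univ.image A, ∑ b ∈ Finset.univ.image B, ∑ c ∈ Finset.univ.image C,
            S (a, b, c) := Finset.sum_congr rfl fun a _ => Finset.sum_product _ _ _
      _ = ∑ a ∈ Finset.univ.image A, ∑ c ∈ Finset.univ.image C, ∑ b ∈ Finset.univ.image B,
            S (a, b, c) := Finset.sum_congr rfl fun a _ => Finset.sum_comm
      _ = _ := Finset.sum_comm
  have hinner : ∀ c ∈ Finset.univ.image C,
      ∑ a ∈ Finset.univ.image A, ∑ b ∈ Finset.univ.image B, S (a, b, c) ≤ pC c := by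
    intro c _
    have e1 : ∑ a ∈ Finset.univ.image A, ∑ b ∈ Finset.univ.image B, S (a, b, c)
        = (∑ a ∈ Finset.univ.image A, pAC (a, c)) * (∑ b ∈ Finset.univ.image B, pBC (b, c))
            / pC c := by
      rw [Finset.sum_mul_sum]
      simp only [Finset.sum_div]
      rfl
    rw [e1, hpAC, hpBC, marginal p A C c, marginal p B C c, ← hpC]
    rcases eq_or_lt_of_le (prob_nonneg p hp0 C c) with h | h
    · rw [← hpC] at h; rw [← h]; simp
    · rw [← hpC] at h
      rw [mul_div_assoc, div_self (ne_of_gt h), mul_one]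
  have hsum5 : ∑ c ∈ Finset.univ.image C, pC c = 1 := by
    rw [hpC, sum_prob, hp1]
  have h5 : ∑ ω, p ω * (Real.log (pAC (A ω, C ω)) + Real.log (pBC (B ω, C ω)) - Real.log (pT (T ω)) - Real.log (pC (C ω))) ≤ ∑ ω, (p ω * R (T ω) - p ω) := Finset.sum_le_sum (fun ω _ => key ω)
  have h6 : ∑ t ∈ Finset.univ.image T, pT t * R t ≤ ∑ t ∈ Finset.univ.image T, S t := Finset.sum_le_sum hterm
  have h7 : ∑ c ∈ Finset.univ.image C, (∑ a ∈ Finset.univ.image A, ∑ b ∈ Finset.univ.image B, S (a, b, c)) ≤ ∑ c ∈ Finset.univ.image C, pC c := Finset.sum_le_sum hinner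
  linarith

lemma cmi_chain (A : Ω → α) (B : Ω → β) (C : Ω → γ) (D : Ω → δ) :
    condMutualInfo p A (fun ω => (B ω, C ω)) D
      = condMutualInfo p A C D + condMutualInfo p A B (fun ω => (C ω, D ω)) := by
  simp only [condMutualInfo]
  have e1 : entropy p (fun ω => ((B ω, C ω), D ω)) = entropy p (fun ω => (B ω, C ω, D ω)) :=
    entropy_congr p _ _ (fun x => (x.1.1, x.1.2, x.2)) (fun x => ((x.1, x.2.1), x.2.2))
      (fun ω => rfl) (fun ω => rfl)
  have e2 : entropy p (fun ω => (A ω, (B ω, C ω), D ω))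
      = entropy p (fun ω => (A ω, B ω, C ω, D ω)) :=
    entropy_congr p _ _ (fun x => (x.1, x.2.1.1, x.2.1.2, x.2.2))
      (fun x => (x.1, (x.2.1, x.2.2.1), x.2.2.2)) (fun ω => rfl) (fun ω => rfl)
  rw [e1, e2]; ring

lemma cmi_swap12 (A : Ω → α) (B : Ω → β) (C : Ω → γ) :
    condMutualInfo p A B C = condMutualInfo p B A C := by
  simp only [condMutualInfo]
  have e : entropy p (fun ω => (A ω, B ω, C ω)) = entropy p (fun ω => (B ω, A ω, C ω)) :=
    entropy_congr p _ _ (fun x => (x.2.1, x.1, x.2.2)) (fun x => (x.2.1, x.1, x.2.2))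
      (fun ω => rfl) (fun ω => rfl)
  rw [e]; ring

lemma cmi_swapB (A : Ω → α) (B : Ω → β) (C : Ω → γ) (D : Ω → δ) :
    condMutualInfo p A (fun ω => (B ω, C ω)) D
      = condMutualInfo p A (fun ω => (C ω, B ω)) D := by
  simp only [condMutualInfo]
  have e1 : entropy p (fun ω => ((B ω, C ω), D ω)) = entropy p (fun ω => ((C ω, B ω), D ω)) :=
    entropy_congr p _ _ (fun x => ((x.1.2, x.1.1), x.2)) (fun x => ((x.1.2, x.1.1), x.2))
      (fun ω => rfl) (fun ω => rfl)
  have e2 : entropy p (fun ω => (A ω, (B ω, C ω), D ω))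
      = entropy p (fun ω => (A ω, (C ω, B ω), D ω)) :=
    entropy_congr p _ _ (fun x => (x.1, (x.2.1.2, x.2.1.1), x.2.2))
      (fun x => (x.1, (x.2.1.2, x.2.1.1), x.2.2)) (fun ω => rfl) (fun ω => rfl)
  rw [e1, e2]

lemma cmi_swapC (A : Ω → α) (B : Ω → β) (C : Ω → γ) (D : Ω → δ) :
    condMutualInfo p A B (fun ω => (C ω, D ω))
      = condMutualInfo p A B (fun ω => (D ω, C ω)) := by
  simp only [condMutualInfo]
  have e1 : entropy p (fun ω => (A ω, C ω, D ω)) = entropy p (fun ω => (A ω, D ω, C ω)) :=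
    entropy_congr p _ _ (fun x => (x.1, x.2.2, x.2.1)) (fun x => (x.1, x.2.2, x.2.1))
      (fun ω => rfl) (fun ω => rfl)
  have e2 : entropy p (fun ω => (B ω, C ω, D ω)) = entropy p (fun ω => (B ω, D ω, C ω)) :=
    entropy_congr p _ _ (fun x => (x.1, x.2.2, x.2.1)) (fun x => (x.1, x.2.2, x.2.1))
      (fun ω => rfl) (fun ω => rfl)
  have e3 : entropy p (fun ω => (A ω, B ω, C ω, D ω))
      = entropy p (fun ω => (A ω, B ω, D ω, C ω)) :=
    entropy_congr p _ _ (fun x => (x.1, x.2.1, x.2.2.2, x.2.2.1))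
      (fun x => (x.1, x.2.1, x.2.2.2, x.2.2.1)) (fun ω => rfl) (fun ω => rfl)
  have e4 : entropy p (fun ω => (C ω, D ω)) = entropy p (fun ω => (D ω, C ω)) :=
    entropy_congr p _ _ (fun x => (x.2, x.1)) (fun x => (x.2, x.1)) (fun ω => rfl) (fun ω => rfl)
  rw [e1, e2, e3, e4]

end Aux2

/-- If `Y ↔ X ↔ (Z₁,Z̃)` and `X ↔ Z₁ ↔ Y` hold, then `X ↔ (Z₁,Z̃) ↔ Y` holds,
i.e. `I(Y;X∣(Z₁,Z̃)) = 0` (explicitness). -/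
theorem stmt_4 {Ω α β γ δ : Type*} [Fintype Ω]
    [DecidableEq α] [DecidableEq β] [DecidableEq γ] [DecidableEq δ]
    (p : Ω → ℝ) (hp : IsPMF p) (X : Ω → α) (Y : Ω → β) (Z₁ : Ω → γ) (Zt : Ω → δ)
    (hRep : condMutualInfo p Y (fun ω => (Z₁ ω, Zt ω)) X = 0)
    (hSuff : condMutualInfo p X Y Z₁ = 0) :
    condMutualInfo p Y X (fun ω => (Z₁ ω, Zt ω)) = 0 := by
  have h1 : condMutualInfo p Y (fun ω => (Zt ω, Z₁ ω)) X = 0 := by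
    rw [cmi_swapB p Y Zt Z₁ X]; exact hRep
  have hchain1 := cmi_chain p Y Zt Z₁ X
  have n1 : 0 ≤ condMutualInfo p Y Z₁ X := cmi_nonneg p hp Y Z₁ X
  have n2 : 0 ≤ condMutualInfo p Y Zt (fun ω => (Z₁ ω, X ω)) := cmi_nonneg p hp Y Zt _
  have hz : condMutualInfo p Y Zt (fun ω => (Z₁ ω, X ω)) = 0 := by
    rw [h1] at hchain1; linarith
  have hz' : condMutualInfo p Y Zt (fun ω => (X ω, Z₁ ω)) = 0 := by
    rw [← cmi_swapC p Y Zt Z₁ X]; exact hz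
  have hyx : condMutualInfo p Y X Z₁ = 0 := (cmi_swap12 p X Y Z₁).symm.trans hSuff
  have hchain2 := cmi_chain p Y Zt X Z₁
  have hchain3 := cmi_chain p Y X Zt Z₁
  have hswap := cmi_swapB p Y Zt X Z₁
  have n3 : 0 ≤ condMutualInfo p Y Zt Z₁ := cmi_nonneg p hp Y Zt Z₁
  have n4 : 0 ≤ condMutualInfo p Y X (fun ω => (Zt ω, Z₁ ω)) := cmi_nonneg p hp Y X _
  have htgt : condMutualInfo p Y X (fun ω => (Z₁ ω, Zt ω))
      = condMutualInfo p Y X (fun ω => (Zt ω, Z₁ ω)) := cmi_swapC p Y X Z₁ Zt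
  rw [htgt]
  linarith
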